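/- Fix a finite graph G = ([D], E) with maximum degree Δ and assume m > 2Δ. Let c be a uniform proper m-coloring of G and, independently of c, let T be a random finite subset of [D] drawn from a probability measure μ. Then the expected color collision count satisfies E[|T| − |c(T)|] ≤ (1/(m − 2Δ)) · E[|K(T) \ E|]. Consequently, for any L-Hamming-Lipschitz function f : {0,1}^D → ℝ and χ the collision resolution function induced by c, E[|f(x_T) − f(χ(x_T))|] ≤ (L/(m − 2Δ)) · E[|K(T) \ E|], where x_T ∈ {0,1}^D is the characteristic vector of T. -/

import Mathlib

open MeasureTheory Finset
open scoped Classical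

noncomputable section

/-- `K T`: the edge set of the complete graph on the finite vertex set `T`, i.e. all
unordered pairs of distinct elements of `T`. -/
def completeEdges {D : ℕ} (T : Finset (Fin D)) : Finset (Sym2 (Fin D)) :=
  T.sym2.filter (fun e => ¬ e.IsDiag)

/-- Degree of a vertex in the graph on `Fin D` with edge set `E`. -/
def degE {D : ℕ} (E : Finset (Sym2 (Fin D))) (v : Fin D) : ℕ :=
  (E.filter (fun e => v ∈ e)).card

/-- Maximum degree of the graph with edge set `E`. -/
def maxDegE {D : ℕ} (E : Finset (Sym2 (Fin D))) : ℕ :=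
  Finset.univ.sup (degE E)

/-- The finset of proper `m`-colorings of the graph on `Fin D` with edge set `E`. -/
def properColorings {D : ℕ} (E : Finset (Sym2 (Fin D))) (m : ℕ) : Finset (Fin D → Fin m) :=
  Finset.univ.filter (fun c => ∀ x y : Fin D, s(x, y) ∈ E → c x ≠ c y)

/-- The collision resolution function `χ` induced by a coloring `c`: zero out each active
coordinate `i` such that some smaller active coordinate `j < i` has the same color. -/
def chi {D : ℕ} {γ : Type*} (c : Fin D → γ) (x : Fin D → Bool) : Fin D → Bool :=
  fun i => decide (x i = true ∧ ∀ j : Fin D, j < i → x j = true → c j ≠ c i)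

/-- Characteristic (indicator) vector `x_T ∈ {0,1}^D` of a finite set of indices `T`. -/
def indVec {D : ℕ} (T : Finset (Fin D)) : Fin D → Bool :=
  fun i => decide (i ∈ T)

instance finsetFinMeasurableSpace {D : ℕ} : MeasurableSpace (Finset (Fin D)) := ⊤

namespace CP

variable {D m : ℕ}

def leaders (c : Fin D → Fin m) (T : Finset (Fin D)) : Finset (Fin D) :=
  T.filter (fun i => ∀ j ∈ T, j < i → c j ≠ c i)

lemma leaders_subset (c : Fin D → Fin m) (T : Finset (Fin D)) : leaders c T ⊆ T :=
  filter_subset _ _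

lemma card_image_eq (c : Fin D → Fin m) (T : Finset (Fin D)) :
    (T.image c).card = (leaders c T).card := by
  have himg : (leaders c T).image c = T.image c := by
    apply Finset.Subset.antisymm
    · exact image_subset_image (leaders_subset c T)
    · intro a ha
      obtain ⟨i, hi, rfl⟩ := mem_image.1 ha
      have hne : (T.filter (fun j => c j = c i)).Nonempty := ⟨i, mem_filter.2 ⟨hi, rfl⟩⟩
      have h0 := (T.filter (fun j => c j = c i)).min'_mem hne
      rw [mem_filter] at h0
      refine mem_image.2 ⟨_, ?_, h0.2⟩
      refine mem_filter.2 ⟨h0.1, fun j hj hji hcj => ?_⟩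
      have : (T.filter (fun j => c j = c i)).min' hne ≤ j :=
        min'_le _ _ (mem_filter.2 ⟨hj, by rw [hcj, h0.2]⟩)
      exact absurd hji (not_lt.2 this)
  have hinj : Set.InjOn c (leaders c T) := by
    intro x hx y hy hxy
    rw [mem_coe, leaders, mem_filter] at hx hy
    rcases lt_trichotomy x y with h | h | h
    · exact absurd hxy (hy.2 x hx.1 h)
    · exact h
    · exact absurd hxy.symm (hx.2 y hy.1 h)
  rw [← himg, card_image_of_injOn hinj]

lemma collision_count_le {E : Finset (Sym2 (Fin D))} {c : Fin D → Fin m}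
    (hc : ∀ x y : Fin D, s(x, y) ∈ E → c x ≠ c y) (T : Finset (Fin D)) :
    T.card - (T.image c).card ≤
      ((completeEdges T \ E).filter (fun e => (Sym2.map c e).IsDiag)).card := by
  rw [card_image_eq, ← card_sdiff_of_subset (leaders_subset c T)]
  set P : Fin D → Finset (Fin D) := fun i => T.filter (fun j => j < i ∧ c j = c i) with hP
  have hne : ∀ i ∈ T \ leaders c T, (P i).Nonempty := by
    intro i hi
    rw [mem_sdiff] at hi
    have h2 := hi.2
    simp only [leaders, mem_filter, not_and, hi.1, true_implies] at h2
    push_neg at h2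
    obtain ⟨j, hj, hji, hcj⟩ := h2
    exact ⟨j, mem_filter.2 ⟨hj, hji, hcj⟩⟩
  refine card_le_card_of_injOn
    (fun i => if h : (P i).Nonempty then s((P i).min' h, i) else s(i, i)) ?_ ?_
  · intro i hi
    dsimp only
    rw [dif_pos (hne i hi)]
    obtain ⟨hjT, hji, hcj⟩ := mem_filter.1 ((P i).min'_mem (hne i hi))
    have hiT : i ∈ T := (mem_sdiff.1 hi).1
    refine mem_filter.2 ⟨mem_sdiff.2 ⟨?_, ?_⟩, ?_⟩
    · refine mem_filter.2 ⟨?_, ?_⟩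
      · rw [mem_sym2_iff]
        intro a ha
        rcases Sym2.mem_iff.1 ha with rfl | rfl
        · exact hjT
        · exact hiT
      · rw [Sym2.mk_isDiag_iff]; exact ne_of_lt hji
    · intro hmemE
      exact hc _ _ hmemE hcj
    · rw [Sym2.map_pair_eq, Sym2.mk_isDiag_iff]; exact hcj
  · intro i₁ h₁ i₂ h₂ heq
    rw [mem_coe] at h₁ h₂
    dsimp only at heq
    rw [dif_pos (hne i₁ h₁), dif_pos (hne i₂ h₂)] at heq
    have hl₁ := ((mem_filter.1 ((P i₁).min'_mem (hne i₁ h₁))).2).1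
    have hl₂ := ((mem_filter.1 ((P i₂).min'_mem (hne i₂ h₂))).2).1
    rcases Sym2.eq_iff.1 heq with ⟨h, rfl⟩ | ⟨ha, hb⟩
    · rfl
    · exact absurd (ha ▸ hl₁) (not_lt.2 (le_of_lt (hb ▸ hl₂)))

lemma card_mono_colorings_le (E : Finset (Sym2 (Fin D))) (hE : ∀ e ∈ E, ¬ e.IsDiag)
    (e : Sym2 (Fin D)) (hd : ¬ e.IsDiag) (heE : e ∉ E) :
    (m - 2 * maxDegE E) *
        ((properColorings E m).filter (fun c => (Sym2.map c e).IsDiag)).card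
      ≤ (properColorings E m).card := by
  induction e using Sym2.ind with
  | _ i j =>
  have hij : i ≠ j := by simpa [Sym2.mk_isDiag_iff] using hd
  have hfe : ((properColorings E m).filter (fun c => (Sym2.map c s(i,j)).IsDiag)) =
      ((properColorings E m).filter (fun c => c i = c j)) := by
    apply filter_congr; intro c _; simp [Sym2.map_pair_eq, Sym2.mk_isDiag_iff]
  rw [hfe]
  set A := (properColorings E m).filter (fun c => c i = c j) with hA
  set nbrs : Finset (Fin D) := Finset.univ.filter (fun v => s(i, v) ∈ E) with hnbrs
  have hnb : nbrs.card ≤ maxDegE E := by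
    have h1 : nbrs.card ≤ degE E i := by
      refine card_le_card_of_injOn (fun v => s(i, v)) ?_ ?_
      · intro v hv
        rw [mem_coe, hnbrs, mem_filter] at hv
        exact mem_filter.2 ⟨hv.2, Sym2.mem_mk_left i v⟩
      · intro v _ w _ hvw
        exact Sym2.congr_right.1 hvw
    exact le_trans h1 (Finset.le_sup (mem_univ i))
  set S : (Fin D → Fin m) → Finset (Fin m) := fun c => Finset.univ \ nbrs.image c with hS
  have hScard : ∀ c, m - 2 * maxDegE E ≤ (S c).card := by
    intro c
    rw [hS]
    simp only
    rw [card_sdiff_of_subset (subset_univ _), card_univ, Fintype.card_fin]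
    have : (nbrs.image c).card ≤ 2 * maxDegE E :=
      le_trans (card_image_le) (le_trans hnb (by omega))
    omega
  calc (m - 2 * maxDegE E) * A.card = ∑ _c ∈ A, (m - 2 * maxDegE E) := by
        rw [sum_const, smul_eq_mul, mul_comm]
    _ ≤ ∑ c ∈ A, (S c).card := sum_le_sum (fun c _ => hScard c)
    _ = (A.sigma S).card := (card_sigma _ _).symm
    _ ≤ (properColorings E m).card := by
        refine card_le_card_of_injOn (fun p => Function.update p.1 i p.2) ?_ ?_
        · rintro ⟨c, k⟩ hp
          rw [mem_coe, mem_sigma] at hp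
          obtain ⟨hcA, hkS⟩ := hp
          rw [hA, mem_filter] at hcA
          have hcP := (mem_filter.1 hcA.1).2
          have hknot : k ∉ nbrs.image c := by
            rw [hS] at hkS; simp only at hkS
            exact (mem_sdiff.1 hkS).2
          refine mem_filter.2 ⟨mem_univ _, ?_⟩
          intro x y hxy
          dsimp only at hcP ⊢
          by_cases hx : x = i <;> by_cases hy : y = i
          · subst hx; subst hy
            exact absurd (Sym2.mk_isDiag_iff.2 rfl) (hE _ hxy)
          · subst hx
            rw [Function.update_self, Function.update_of_ne hy]
            intro hk
            exact hknot (mem_image.2 ⟨y, mem_filter.2 ⟨mem_univ _, hxy⟩, hk.symm⟩)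
          · subst hy
            rw [Function.update_self, Function.update_of_ne hx]
            intro hk
            refine hknot (mem_image.2 ⟨x, mem_filter.2 ⟨mem_univ _, ?_⟩, hk⟩)
            rw [Sym2.eq_swap]; exact hxy
          · rw [Function.update_of_ne hx, Function.update_of_ne hy]
            exact hcP x y hxy
        · rintro ⟨c, k⟩ hp ⟨c', k'⟩ hp' heq
          rw [mem_coe, mem_sigma] at hp hp'
          have hcij : c i = c j := (mem_filter.1 hp.1).2
          have hcij' : c' i = c' j := (mem_filter.1 hp'.1).2
          have hk : k = k' := by
            have := congrFun heq i
            dsimp only at this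
            rwa [Function.update_self, Function.update_self] at this
          have hoff : ∀ x, x ≠ i → c x = c' x := by
            intro x hx
            have := congrFun heq x
            dsimp only at this
            rwa [Function.update_of_ne hx, Function.update_of_ne hx] at this
          have hcc : c = c' := by
            funext x
            by_cases hx : x = i
            · subst hx
              rw [hcij, hcij', hoff j (Ne.symm hij)]
            · exact hoff x hx
          subst hcc; subst hk; rfl

lemma sum_collision_le (E : Finset (Sym2 (Fin D))) (hE : ∀ e ∈ E, ¬ e.IsDiag)
    (T : Finset (Fin D)) :
    (m - 2 * maxDegE E) * ∑ c ∈ properColorings E m, (T.card - (T.image c).card) ≤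
      (properColorings E m).card * (completeEdges T \ E).card := by
  have h1 : ∑ c ∈ properColorings E m, (T.card - (T.image c).card) ≤
      ∑ c ∈ properColorings E m,
        ((completeEdges T \ E).filter (fun e => (Sym2.map c e).IsDiag)).card := by
    refine sum_le_sum (fun c hc => ?_)
    exact collision_count_le (mem_filter.1 hc).2 T
  have h2 : ∑ c ∈ properColorings E m,
        ((completeEdges T \ E).filter (fun e => (Sym2.map c e).IsDiag)).card
      = ∑ e ∈ completeEdges T \ E,
        ((properColorings E m).filter (fun c => (Sym2.map c e).IsDiag)).card := by
    simp only [card_filter]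
    exact sum_comm
  calc (m - 2 * maxDegE E) * ∑ c ∈ properColorings E m, (T.card - (T.image c).card)
      ≤ (m - 2 * maxDegE E) * ∑ e ∈ completeEdges T \ E,
          ((properColorings E m).filter (fun c => (Sym2.map c e).IsDiag)).card := by
        rw [← h2]; exact Nat.mul_le_mul_left _ h1
    _ = ∑ e ∈ completeEdges T \ E, (m - 2 * maxDegE E) *
          ((properColorings E m).filter (fun c => (Sym2.map c e).IsDiag)).card := mul_sum _ _ _
    _ ≤ ∑ _e ∈ completeEdges T \ E, (properColorings E m).card := by
        refine sum_le_sum (fun e he => ?_)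
        rw [mem_sdiff] at he
        have hd := (mem_filter.1 he.1).2
        exact card_mono_colorings_le E hE e hd he.2
    _ = (properColorings E m).card * (completeEdges T \ E).card := by
        rw [sum_const, smul_eq_mul, mul_comm]

end CP

namespace CP

variable {D m : ℕ}

lemma hamming_eq (c : Fin D → Fin m) (T : Finset (Fin D)) :
    hammingDist (indVec T) (chi c (indVec T)) = T.card - (T.image c).card := by
  rw [card_image_eq, ← card_sdiff_of_subset (leaders_subset c T)]
  show (Finset.univ.filter fun i => indVec T i ≠ chi c (indVec T) i).card = _
  congr 1
  ext i
  simp only [mem_filter, mem_univ, true_and, mem_sdiff, leaders, indVec, chi, ne_eq,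
    decide_eq_decide, decide_eq_true_eq]
  by_cases hiT : i ∈ T <;> simp [hiT] <;> tauto

end CP

/-- Fix a finite graph `G = ([D], E)` with maximum degree `Δ` and assume
`m > 2Δ`.  Let `c` be a uniform proper `m`-coloring of `G` (expectation over `c` is the
average over the finset of proper `m`-colorings) and, independently of `c`, let `T` be a
random finite subset of `[D]` drawn from a probability measure `μ`.  Then the expected
color collision count satisfies `E[|T| − |c(T)|] ≤ (1/(m − 2Δ)) · E[|K(T) \ E|]`.
Consequently, for any `L`-Hamming-Lipschitz `f : {0,1}^D → ℝ` and `χ` the collision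
resolution function induced by `c`,
`E[|f(x_T) − f(χ(x_T))|] ≤ (L/(m − 2Δ)) · E[|K(T) \ E|]`. -/
theorem expected_collision_count_le
    {D m : ℕ} (E : Finset (Sym2 (Fin D))) (hE : ∀ e ∈ E, ¬ e.IsDiag)
    (hm : 2 * maxDegE E < m)
    (μ : Measure (Finset (Fin D))) [IsProbabilityMeasure μ] :
    (((properColorings E m).card : ℝ))⁻¹ *
        ∑ c ∈ properColorings E m,
          (∫ T, ((T.card : ℝ) - ((T.image c).card : ℝ)) ∂μ)
      ≤ (1 / ((m : ℝ) - 2 * (maxDegE E : ℝ))) *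
          ∫ T, ((completeEdges T \ E).card : ℝ) ∂μ ∧
    ∀ (L : ℝ) (f : (Fin D → Bool) → ℝ),
      (∀ x y : Fin D → Bool, |f x - f y| ≤ L * (hammingDist x y : ℝ)) →
      (((properColorings E m).card : ℝ))⁻¹ *
          ∑ c ∈ properColorings E m,
            (∫ T, |f (indVec T) - f (chi c (indVec T))| ∂μ)
        ≤ (L / ((m : ℝ) - 2 * (maxDegE E : ℝ))) *
            ∫ T, ((completeEdges T \ E).card : ℝ) ∂μ := by
  haveI : MeasurableSingletonClass (Finset (Fin D)) :=
    ⟨fun _ => MeasurableSpace.measurableSet_top⟩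
  have hint : ∀ g : Finset (Fin D) → ℝ, Integrable g μ := fun g => Integrable.of_finite
  set a : ℝ := (m : ℝ) - 2 * (maxDegE E : ℝ) with haa
  have ha : 0 < a := by
    rw [haa]
    have : (2 * maxDegE E : ℝ) < (m : ℝ) := by exact_mod_cast hm
    push_cast at this ⊢
    linarith
  have hacast : ((m - 2 * maxDegE E : ℕ) : ℝ) = a := by
    rw [Nat.cast_sub hm.le, haa]; push_cast; ring
  by_cases hD : D = 0
  · subst hD
    have hT : ∀ T : Finset (Fin 0), T = ∅ := fun T => Finset.eq_empty_of_isEmpty T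
    have hK0 : ∀ T : Finset (Fin 0), ((completeEdges T \ E).card : ℝ) = 0 := by
      intro T
      rw [hT T]
      simp [completeEdges]
    have hKint : (∫ T, ((completeEdges T \ E).card : ℝ) ∂μ) = 0 := by
      simp only [hK0, integral_zero]
    constructor
    · have h0 : ∀ c : Fin 0 → Fin m,
          (∫ T, ((T.card : ℝ) - ((T.image c).card : ℝ)) ∂μ) = 0 := by
        intro c
        have hz : ∀ T : Finset (Fin 0), ((T.card : ℝ) - ((T.image c).card : ℝ)) = 0 := by
          intro T; rw [hT T]; simp
        simp only [hz, integral_zero]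
      simp only [h0, sum_const_zero, mul_zero, hKint, le_refl]
    · intro L f hf
      have hchi : ∀ (c : Fin 0 → Fin m) (T : Finset (Fin 0)), chi c (indVec T) = indVec T := by
        intro c T; funext i; exact isEmptyElim i
      simp only [hchi, sub_self, abs_zero, integral_zero, sum_const_zero, mul_zero, hKint,
        le_refl]
  · set N : ℝ := ((properColorings E m).card : ℝ) with hN
    have hNn : (0:ℝ) ≤ N := Nat.cast_nonneg _
    have hpt : ∀ T : Finset (Fin D),
        a * (∑ c ∈ properColorings E m, ((T.card : ℝ) - ((T.image c).card : ℝ))) ≤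
          N * ((completeEdges T \ E).card : ℝ) := by
      intro T
      have h := CP.sum_collision_le (m := m) E hE T
      have hc1 : ((∑ c ∈ properColorings E m, (T.card - (T.image c).card) : ℕ) : ℝ) =
          ∑ c ∈ properColorings E m, ((T.card : ℝ) - ((T.image c).card : ℝ)) := by
        rw [Nat.cast_sum]
        exact Finset.sum_congr rfl fun c _ => Nat.cast_sub card_image_le
      have h' := (Nat.cast_le (α := ℝ)).2 h
      rw [Nat.cast_mul, Nat.cast_mul, hacast, hc1] at h'
      exact h'
    have part1 : N⁻¹ *
        (∑ c ∈ properColorings E m, ∫ T, ((T.card : ℝ) - ((T.image c).card : ℝ)) ∂μ)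
        ≤ (1 / a) * ∫ T, ((completeEdges T \ E).card : ℝ) ∂μ := by
      rw [← integral_finset_sum _ (fun c _ => hint _)]
      by_cases hN0 : (properColorings E m).card = 0
      · have hPCe : properColorings E m = ∅ := card_eq_zero.1 hN0
        rw [hPCe]
        simp only [sum_empty, integral_zero, mul_zero]
        exact mul_nonneg (by positivity) (integral_nonneg fun T => Nat.cast_nonneg _)
      · have hNpos : (0:ℝ) < N := by
          rw [hN]; exact_mod_cast Nat.pos_of_ne_zero hN0
        have hmono : (∫ T, (∑ c ∈ properColorings E m,
              ((T.card : ℝ) - ((T.image c).card : ℝ))) ∂μ) ≤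
            ∫ T, (N / a) * ((completeEdges T \ E).card : ℝ) ∂μ := by
          refine integral_mono (hint _) (hint _) (fun T => ?_)
          have h := hpt T
          rw [div_mul_eq_mul_div, le_div_iff₀ ha]
          linarith
        rw [integral_const_mul] at hmono
        calc N⁻¹ * (∫ T, (∑ c ∈ properColorings E m,
              ((T.card : ℝ) - ((T.image c).card : ℝ))) ∂μ)
            ≤ N⁻¹ * (N / a * ∫ T, ((completeEdges T \ E).card : ℝ) ∂μ) :=
              mul_le_mul_of_nonneg_left hmono (inv_nonneg.2 hNn)
          _ = (1 / a) * ∫ T, ((completeEdges T \ E).card : ℝ) ∂μ := by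
              rw [← mul_assoc, ← mul_div_assoc, inv_mul_cancel₀ hNpos.ne']
    refine ⟨part1, ?_⟩
    intro L f hf
    have hL : (0:ℝ) ≤ L := by
      have i0 : Fin D := ⟨0, Nat.pos_of_ne_zero hD⟩
      set x₀ : Fin D → Bool := fun _ => false with hx₀
      set y₀ : Fin D → Bool := Function.update x₀ i0 true with hy₀
      have hxy : x₀ ≠ y₀ := by
        intro h
        have := congrFun h i0
        rw [hy₀, Function.update_self, hx₀] at this
        exact Bool.false_ne_true this
      have hdpos : 0 < hammingDist x₀ y₀ := hammingDist_pos.2 hxy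
      by_contra hneg
      push_neg at hneg
      have h2 : L * (hammingDist x₀ y₀ : ℝ) < 0 :=
        mul_neg_of_neg_of_pos hneg (by exact_mod_cast hdpos)
      linarith [abs_nonneg (f x₀ - f y₀), hf x₀ y₀]
    have hptc : ∀ c ∈ properColorings E m,
        (∫ T, |f (indVec T) - f (chi c (indVec T))| ∂μ) ≤
          L * ∫ T, ((T.card : ℝ) - ((T.image c).card : ℝ)) ∂μ := by
      intro c _
      rw [← integral_const_mul]
      refine integral_mono (hint _) (hint _) (fun T => ?_)
      have h1 := hf (indVec T) (chi c (indVec T))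
      rw [CP.hamming_eq c T, Nat.cast_sub card_image_le] at h1
      exact h1
    calc N⁻¹ * ∑ c ∈ properColorings E m, (∫ T, |f (indVec T) - f (chi c (indVec T))| ∂μ)
        ≤ N⁻¹ * ∑ c ∈ properColorings E m,
            (L * ∫ T, ((T.card : ℝ) - ((T.image c).card : ℝ)) ∂μ) :=
          mul_le_mul_of_nonneg_left (sum_le_sum hptc) (inv_nonneg.2 hNn)
      _ = L * (N⁻¹ * ∑ c ∈ properColorings E m,
            (∫ T, ((T.card : ℝ) - ((T.image c).card : ℝ)) ∂μ)) := by
          rw [← mul_sum]; ring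
      _ ≤ L * ((1 / a) * ∫ T, ((completeEdges T \ E).card : ℝ) ∂μ) :=
          mul_le_mul_of_nonneg_left part1 hL
      _ = (L / a) * ∫ T, ((completeEdges T \ E).card : ℝ) ∂μ := by ring

end
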